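/- Let X be a finite set of observations with |X| ≥ 3 and x, y, z ∈ X. Let B_{xyz} = B_{xy} ∪ B_{yz} ∪ B_{xz}, p = |B_{xz}|, q = |B_{xyz} \ B_{xz}|, O_{xy} = |B_{xy}|, O_{yz} = |B_{yz}|, O_{xz} = |B_{xz}|. Then (p + q) · O_{xz} · D_{xz} ≤ p · ( O_{xy} · D_{xy} + O_{yz} · D_{yz} ), and consequently D_{xz} ≤ ( p · max(O_{xy}, O_{yz}) / ((p + q) · O_{xz}) ) · ( D_{xy} + D_{yz} ), where the prefactor is at most 1 since p = O_{xz} and max(O_{xy}, O_{yz}) ≤ p + q = |B_{xyz}|. -/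

import Mathlib

open Finset
open scoped Classical

/-- The set of times at which observation `x` lies within the band determined by the
unordered pair `s` of observations: times `t` with `b_ℓ(t) ≤ x t ≤ b_u(t)`. -/
noncomputable def timesInS {T : Type*} [Fintype T] (s : Sym2 (T → ℝ)) (x : T → ℝ) : Finset T :=
  Finset.univ.filter (fun t =>
    Sym2.lift ⟨fun v w => min (v t) (w t), fun v w => min_comm (v t) (w t)⟩ s ≤ x t ∧
    x t ≤ Sym2.lift ⟨fun v w => max (v t) (w t), fun v w => max_comm (v t) (w t)⟩ s)

/-- The set of bands of a dataset `X`: one band for each unordered pair of distinct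
observations in `X`. -/
noncomputable def bands {T : Type*} [Fintype T] (X : Finset (T → ℝ)) : Finset (Sym2 (T → ℝ)) :=
  X.sym2.filter (fun s => ¬ s.IsDiag)

/-- Bandwise (Jaccard) similarity of `x` and `y` with respect to the band `s`. -/
noncomputable def bandSimS {T : Type*} [Fintype T] (s : Sym2 (T → ℝ)) (x y : T → ℝ) : ℝ :=
  if timesInS s x ∪ timesInS s y = ∅ then 1
  else ((timesInS s x ∩ timesInS s y).card : ℝ) / ((timesInS s x ∪ timesInS s y).card : ℝ)

/-- Bandwise (Jaccard) distance of `x` and `y` with respect to the band `s`. -/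
noncomputable def bandDistS {T : Type*} [Fintype T] (s : Sym2 (T → ℝ)) (x y : T → ℝ) : ℝ :=
  1 - bandSimS s x y

/-- `B_{xy}`: the set of bands of `X` containing `x` or `y` at some time. -/
noncomputable def Bxy {T : Type*} [Fintype T] (X : Finset (T → ℝ)) (x y : T → ℝ) :
    Finset (Sym2 (T → ℝ)) :=
  (bands X).filter (fun s => timesInS s x ∪ timesInS s y ≠ ∅)

/-- The band distance `D_{xy}`: the average bandwise distance over all bands in `B_{xy}`. -/
noncomputable def bandD {T : Type*} [Fintype T] (X : Finset (T → ℝ)) (x y : T → ℝ) : ℝ :=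
  (1 / ((Bxy X x y).card : ℝ)) * ∑ s ∈ Bxy X x y, bandDistS s x y

/-!
The bandwise distance is the Jaccard distance `|A ∆ B| / |A ∪ B|` of the two sets of times
(when `A ∪ B = ∅` both are `0`, thanks to `0 / 0 = 0`), so it satisfies the triangle
inequality. Summing over `B_{xyz}`: on `B_{xz}` use the bandwise triangle inequality; a band of
`B_{xyz} \ B_{xz}` contains neither `x` nor `z` but contains `y`, so it contributes nothing to
`D_{xz}` and `2 ≥ 1` to `d_{xy} + d_{yz}`. Hence
`O_{xz} D_{xz} + q ≤ O_{xy} D_{xy} + O_{yz} D_{yz}`, and as `D_{xz} ≤ 1` this gives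
`(p + q) D_{xz} ≤ O_{xy} D_{xy} + O_{yz} D_{yz}`, from which all three claims follow.
-/

open scoped symmDiff

section Jaccard

variable {α : Type*} [DecidableEq α]

noncomputable def jaccardDist (A B : Finset α) : ℝ := #(A ∆ B) / #(A ∪ B)

variable {A B C : Finset α}

lemma jaccardDist_nonneg : 0 ≤ jaccardDist A B := by
  unfold jaccardDist; positivity

lemma jaccardDist_le_one : jaccardDist A B ≤ 1 :=
  div_le_one_of_le₀ (mod_cast card_le_card symmDiff_subset_union) (Nat.cast_nonneg _)

lemma jaccardDist_comm : jaccardDist A B = jaccardDist B A := by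
  rw [jaccardDist, jaccardDist, symmDiff_comm, union_comm]

@[simp]
lemma jaccardDist_self : jaccardDist A A = 0 := by
  simp [jaccardDist]

lemma card_symmDiff_add_card_inter : #(A ∆ B) + #(A ∩ B) = #(A ∪ B) := by
  rw [symmDiff_eq_sup_sdiff_inf]
  exact card_sdiff_add_card_eq_card inter_subset_union

lemma jaccardDist_eq_one_sub (h : (A ∪ B).Nonempty) :
    jaccardDist A B = 1 - #(A ∩ B) / #(A ∪ B) := by
  have hpos : (0 : ℝ) < #(A ∪ B) := mod_cast h.card_pos
  have hcard : (#(A ∆ B) : ℝ) + #(A ∩ B) = #(A ∪ B) := mod_cast card_symmDiff_add_card_inter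
  rw [jaccardDist, eq_sub_iff_add_eq, ← add_div, hcard, div_self hpos.ne']

lemma jaccardDist_empty_left (hB : B.Nonempty) : jaccardDist ∅ B = 1 := by
  rw [jaccardDist, empty_union, show ∅ ∆ B = B from bot_symmDiff B,
    div_self (mod_cast hB.card_pos.ne')]

lemma div_card_le_jaccardDist {U : Finset α} (hU : A ∪ B ⊆ U) :
    (#(A ∆ B) : ℝ) / #U ≤ jaccardDist A B := by
  obtain hAB | hAB := (A ∪ B).eq_empty_or_nonempty
  · have : A ∆ B ⊆ ∅ := hAB ▸ symmDiff_subset_union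
    simp [subset_empty.mp this, jaccardDist]
  · exact div_le_div_of_nonneg_left (Nat.cast_nonneg _) (mod_cast hAB.card_pos)
      (mod_cast card_le_card hU)

/-- Each point of `B \ (A ∪ C)` lies in both `A ∆ B` and `B ∆ C`, but not in `A ∆ C`. -/
lemma card_symmDiff_add_two_mul_card_sdiff_le :
    #(A ∆ C) + 2 * #(B \ (A ∪ C)) ≤ #(A ∆ B) + #(B ∆ C) := by
  have hunion : A ∆ C ∪ B \ (A ∪ C) ⊆ A ∆ B ∪ B ∆ C := by
    intro t; simp only [mem_union, mem_symmDiff, mem_sdiff]; tauto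
  have hdisj : Disjoint (A ∆ C) (B \ (A ∪ C)) := by
    rw [disjoint_left]; intro t; simp only [mem_symmDiff, mem_sdiff, mem_union]; tauto
  have hinter : B \ (A ∪ C) ⊆ A ∆ B ∩ B ∆ C := by
    intro t; simp only [mem_inter, mem_symmDiff, mem_sdiff, mem_union]; tauto
  have := card_le_card hunion
  have := card_le_card hinter
  rw [card_union_of_disjoint hdisj] at *
  have := card_union_add_card_inter (A ∆ B) (B ∆ C)
  omega

/-- With `a = |A ∆ C|`, `n = |A ∪ C|` and `m = |B \ (A ∪ C)|`, the right-hand side is at least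
`(a + 2m) / (n + m)`, which is at least `a / n` because `a ≤ n`. -/
theorem jaccardDist_triangle : jaccardDist A C ≤ jaccardDist A B + jaccardDist B C := by
  obtain hAC | hAC := (A ∪ C).eq_empty_or_nonempty
  · obtain ⟨rfl, rfl⟩ := union_eq_empty.mp hAC
    rw [jaccardDist_self]
    exact add_nonneg jaccardDist_nonneg jaccardDist_nonneg
  set U := B ∪ (A ∪ C)
  have hn : (0 : ℝ) < #(A ∪ C) := mod_cast hAC.card_pos
  have ha : (#(A ∆ C) : ℝ) ≤ #(A ∪ C) := mod_cast card_le_card symmDiff_subset_union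
  have hU : (#U : ℝ) = #(A ∪ C) + #(B \ (A ∪ C)) := by
    rw [← card_sdiff_add_card]; push_cast; ring
  have hcount : (#(A ∆ C) : ℝ) + 2 * #(B \ (A ∪ C)) ≤ #(A ∆ B) + #(B ∆ C) :=
    mod_cast card_symmDiff_add_two_mul_card_sdiff_le
  calc jaccardDist A C = #(A ∆ C) / #(A ∪ C) := rfl
    _ ≤ (#(A ∆ C) + 2 * #(B \ (A ∪ C))) / #U := by
      rw [hU, div_le_div_iff₀ hn (by positivity)]
      nlinarith [Nat.cast_nonneg (α := ℝ) #(B \ (A ∪ C))]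
    _ ≤ #(A ∆ B) / #U + #(B ∆ C) / #U := by
      rw [← add_div]; gcongr
    _ ≤ jaccardDist A B + jaccardDist B C := by
      gcongr
      · exact div_card_le_jaccardDist (union_subset (by grind) (by grind))
      · exact div_card_le_jaccardDist (union_subset (by grind) (by grind))

end Jaccard

section Bands

variable {T : Type*} [Fintype T] {X : Finset (T → ℝ)} {s : Sym2 (T → ℝ)} {x y z : T → ℝ}

lemma bandDistS_eq_jaccardDist (s : Sym2 (T → ℝ)) (x y : T → ℝ) :
    bandDistS s x y = jaccardDist (timesInS s x) (timesInS s y) := by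
  rw [bandDistS, bandSimS]
  split_ifs with h
  · obtain ⟨hx, hy⟩ := union_eq_empty.mp h
    simp [hx, hy]
  · rw [jaccardDist_eq_one_sub (nonempty_iff_ne_empty.mpr h)]

lemma bandDistS_triangle (s : Sym2 (T → ℝ)) (x y z : T → ℝ) :
    bandDistS s x z ≤ bandDistS s x y + bandDistS s y z := by
  simp only [bandDistS_eq_jaccardDist]
  exact jaccardDist_triangle

lemma Bxy_subset_bands : Bxy X x y ⊆ bands X := filter_subset _ _

lemma bandDistS_eq_zero_of_notMem_Bxy (hs : s ∈ bands X) (hxy : s ∉ Bxy X x y) :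
    bandDistS s x y = 0 := by
  obtain ⟨hx, hy⟩ := union_eq_empty.mp (by simpa [Bxy, hs] using hxy)
  rw [bandDistS_eq_jaccardDist, hx, hy, jaccardDist_self]

lemma sum_Bxy_bandDistS_eq_of_subset {V : Finset (Sym2 (T → ℝ))} (hV : Bxy X x y ⊆ V)
    (hVX : V ⊆ bands X) : ∑ s ∈ Bxy X x y, bandDistS s x y = ∑ s ∈ V, bandDistS s x y :=
  sum_subset hV fun _ hs hxy ↦ bandDistS_eq_zero_of_notMem_Bxy (hVX hs) hxy

lemma one_le_bandDistS_add_of_notMem_Bxy (hs : s ∈ Bxy X x y ∪ Bxy X y z)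
    (hxz : s ∉ Bxy X x z) : 1 ≤ bandDistS s x y + bandDistS s y z := by
  have hsX : s ∈ bands X := union_subset Bxy_subset_bands Bxy_subset_bands hs
  obtain ⟨hx, hz⟩ := union_eq_empty.mp (by simpa [Bxy, hsX] using hxz)
  have hy : (timesInS s y).Nonempty := by
    rw [nonempty_iff_ne_empty]
    rintro hy
    simp [Bxy, hx, hy, hz] at hs
  rw [bandDistS_eq_jaccardDist, bandDistS_eq_jaccardDist, hx, hz,
    jaccardDist_comm (A := timesInS s y), jaccardDist_empty_left hy]
  norm_num

lemma card_mul_bandD (X : Finset (T → ℝ)) (x y : T → ℝ) :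
    #(Bxy X x y) * bandD X x y = ∑ s ∈ Bxy X x y, bandDistS s x y := by
  obtain h | h := (Bxy X x y).eq_empty_or_nonempty
  · simp [bandD, h]
  · rw [bandD, ← mul_assoc, mul_one_div_cancel (mod_cast h.card_pos.ne'), one_mul]

lemma bandDistS_nonneg : 0 ≤ bandDistS s x y :=
  bandDistS_eq_jaccardDist s x y ▸ jaccardDist_nonneg

lemma bandDistS_le_one : bandDistS s x y ≤ 1 :=
  bandDistS_eq_jaccardDist s x y ▸ jaccardDist_le_one

lemma bandD_nonneg : 0 ≤ bandD X x y :=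
  mul_nonneg (by positivity) (sum_nonneg fun _ _ ↦ bandDistS_nonneg)

lemma bandD_le_one : bandD X x y ≤ 1 := by
  obtain h | h := (Bxy X x y).eq_empty_or_nonempty
  · simp [bandD, h]
  · have hpos : (0 : ℝ) < #(Bxy X x y) := mod_cast h.card_pos
    rw [← mul_le_mul_iff_right₀ hpos, card_mul_bandD, mul_one]
    simpa using sum_le_card_nsmul _ _ 1 fun _ _ ↦ bandDistS_le_one

lemma sum_bandDistS_add_card_sdiff_le :
    ∑ s ∈ Bxy X x z, bandDistS s x z + #((Bxy X x y ∪ Bxy X y z ∪ Bxy X x z) \ Bxy X x z)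
      ≤ ∑ s ∈ Bxy X x y, bandDistS s x y + ∑ s ∈ Bxy X y z, bandDistS s y z := by
  set U := Bxy X x y ∪ Bxy X y z ∪ Bxy X x z
  have hUX : U ⊆ bands X :=
    union_subset (union_subset Bxy_subset_bands Bxy_subset_bands) Bxy_subset_bands
  have hoff : (#(U \ Bxy X x z) : ℝ)
      ≤ ∑ s ∈ U \ Bxy X x z, (bandDistS s x y + bandDistS s y z) := by
    simpa using card_nsmul_le_sum _ _ (1 : ℝ) fun s hs ↦
      one_le_bandDistS_add_of_notMem_Bxy (by grind) (mem_sdiff.mp hs).2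
  have hon : ∑ s ∈ Bxy X x z, bandDistS s x z
      ≤ ∑ s ∈ Bxy X x z, (bandDistS s x y + bandDistS s y z) :=
    sum_le_sum fun s _ ↦ bandDistS_triangle s x y z
  rw [sum_Bxy_bandDistS_eq_of_subset (x := x) (y := y) (V := U) (by grind) hUX,
    sum_Bxy_bandDistS_eq_of_subset (x := y) (y := z) (V := U) (by grind) hUX, ← sum_add_distrib,
    ← sum_sdiff (subset_union_right : Bxy X x z ⊆ U)]
  linarith

lemma card_add_card_sdiff_mul_bandD_le :
    (#(Bxy X x z) + #((Bxy X x y ∪ Bxy X y z ∪ Bxy X x z) \ Bxy X x z)) * bandD X x z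
      ≤ #(Bxy X x y) * bandD X x y + #(Bxy X y z) * bandD X y z := by
  have hqD := mul_le_of_le_one_right
    (Nat.cast_nonneg (α := ℝ) #((Bxy X x y ∪ Bxy X y z ∪ Bxy X x z) \ Bxy X x z))
    (bandD_le_one (X := X) (x := x) (y := z))
  rw [card_mul_bandD, card_mul_bandD, add_mul, card_mul_bandD]
  linarith [sum_bandDistS_add_card_sdiff_le (X := X) (x := x) (y := y) (z := z)]

end Bands

theorem bandD_triangle_quantitative_general {T : Type*} [Fintype T]
    (X : Finset (T → ℝ))
    (x y z : T → ℝ) :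
    (((Bxy X x z).card : ℝ) + (((Bxy X x y ∪ Bxy X y z ∪ Bxy X x z) \ Bxy X x z).card : ℝ))
        * ((Bxy X x z).card : ℝ) * bandD X x z
      ≤ ((Bxy X x z).card : ℝ) *
          (((Bxy X x y).card : ℝ) * bandD X x y + ((Bxy X y z).card : ℝ) * bandD X y z) ∧
    bandD X x z
      ≤ (((Bxy X x z).card : ℝ) * max ((Bxy X x y).card : ℝ) ((Bxy X y z).card : ℝ)
            / ((((Bxy X x z).card : ℝ)
                + (((Bxy X x y ∪ Bxy X y z ∪ Bxy X x z) \ Bxy X x z).card : ℝ))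
              * ((Bxy X x z).card : ℝ)))
          * (bandD X x y + bandD X y z) ∧
    ((Bxy X x z).card : ℝ) * max ((Bxy X x y).card : ℝ) ((Bxy X y z).card : ℝ)
        / ((((Bxy X x z).card : ℝ)
            + (((Bxy X x y ∪ Bxy X y z ∪ Bxy X x z) \ Bxy X x z).card : ℝ))
          * ((Bxy X x z).card : ℝ))
      ≤ 1 := by
  set p : ℝ := (#(Bxy X x z) : ℝ)
  set q : ℝ := (#((Bxy X x y ∪ Bxy X y z ∪ Bxy X x z) \ Bxy X x z) : ℝ)
  set M : ℝ := max (#(Bxy X x y) : ℝ) #(Bxy X y z)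
  have hp : 0 ≤ p := Nat.cast_nonneg _
  have hcore : (p + q) * bandD X x z ≤ #(Bxy X x y) * bandD X x y + #(Bxy X y z) * bandD X y z :=
    card_add_card_sdiff_mul_bandD_le
  have hM : M ≤ p + q := by
    have hU : (#(Bxy X x y ∪ Bxy X y z ∪ Bxy X x z) : ℝ) = p + q := by
      rw [← card_sdiff_add_card_eq_card subset_union_right]; push_cast; ring
    exact hU ▸ max_le (mod_cast card_le_card (by grind)) (mod_cast card_le_card (by grind))
  refine ⟨by rw [mul_assoc, mul_left_comm]; exact mul_le_mul_of_nonneg_left hcore hp, ?_,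
    div_le_one_of_le₀ (by rw [mul_comm (p + q)]; exact mul_le_mul_of_nonneg_left hM hp)
      (by positivity)⟩
  obtain hp0 | hp0 := hp.eq_or_lt
  · simp [bandD, p, ← hp0]
  rw [mul_comm p, mul_div_mul_right _ _ hp0.ne', div_mul_eq_mul_div, le_div_iff₀ (by positivity)]
  calc bandD X x z * (p + q) = (p + q) * bandD X x z := mul_comm _ _
    _ ≤ #(Bxy X x y) * bandD X x y + #(Bxy X y z) * bandD X y z := hcore
    _ ≤ M * bandD X x y + M * bandD X y z :=
      add_le_add (mul_le_mul_of_nonneg_right (le_max_left _ _) bandD_nonneg)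
        (mul_le_mul_of_nonneg_right (le_max_right _ _) bandD_nonneg)
    _ = M * (bandD X x y + bandD X y z) := (mul_add _ _ _).symm

/-- Quantitative form of the triangle inequality: with `B_{xyz} = B_{xy} ∪ B_{yz} ∪ B_{xz}`,
`p = |B_{xz}|`, `q = |B_{xyz} \ B_{xz}|`, `O_{xy} = |B_{xy}|`, `O_{yz} = |B_{yz}|`,
`O_{xz} = |B_{xz}|`, one has
`(p + q) · O_{xz} · D_{xz} ≤ p · (O_{xy} · D_{xy} + O_{yz} · D_{yz})`, hence
`D_{xz} ≤ (p · max(O_{xy}, O_{yz}) / ((p + q) · O_{xz})) · (D_{xy} + D_{yz})`, where the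
prefactor is at most `1` since `p = O_{xz}` and `max(O_{xy}, O_{yz}) ≤ p + q = |B_{xyz}|`. -/
theorem bandD_triangle_quantitative {T : Type*} [Fintype T] [Nonempty T]
    (X : Finset (T → ℝ)) (hX : 3 ≤ X.card)
    (x y z : T → ℝ) (hx : x ∈ X) (hy : y ∈ X) (hz : z ∈ X) :
    (((Bxy X x z).card : ℝ) + (((Bxy X x y ∪ Bxy X y z ∪ Bxy X x z) \ Bxy X x z).card : ℝ))
        * ((Bxy X x z).card : ℝ) * bandD X x z
      ≤ ((Bxy X x z).card : ℝ) *
          (((Bxy X x y).card : ℝ) * bandD X x y + ((Bxy X y z).card : ℝ) * bandD X y z) ∧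
    bandD X x z
      ≤ (((Bxy X x z).card : ℝ) * max ((Bxy X x y).card : ℝ) ((Bxy X y z).card : ℝ)
            / ((((Bxy X x z).card : ℝ)
                + (((Bxy X x y ∪ Bxy X y z ∪ Bxy X x z) \ Bxy X x z).card : ℝ))
              * ((Bxy X x z).card : ℝ)))
          * (bandD X x y + bandD X y z) ∧
    ((Bxy X x z).card : ℝ) * max ((Bxy X x y).card : ℝ) ((Bxy X y z).card : ℝ)
        / ((((Bxy X x z).card : ℝ)
            + (((Bxy X x y ∪ Bxy X y z ∪ Bxy X x z) \ Bxy X x z).card : ℝ))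
          * ((Bxy X x z).card : ℝ))
      ≤ 1 :=
  bandD_triangle_quantitative_general X x y z
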